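/- Let f : Δ → Δ be holomorphic with boundary fixed point 1 ∈ ∂Δ and finite angular derivative β₁ > 0 (so f(t) → 1 and (1−f(t))/(1−t) → β₁ as t → 1⁻). Then the Poincaré distance satisfies lim_{t→1⁻} k_Δ(t, f(t)) = (1/2)|log β₁|. -/

import Mathlib

open Filter Metric Topology Set

noncomputable section

/-- The Poincaré distance on the unit disk `Δ ⊂ ℂ`. -/
def poincareDist (z w : ℂ) : ℝ :=
  Real.log ((1 + ‖(z - w) / (1 - (starRingEnd ℂ) z * w)‖) /
    (1 - ‖(z - w) / (1 - (starRingEnd ℂ) z * w)‖)) / 2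

/-- one-dimensional case of Lemma 3.1: if `f : Δ → Δ` is holomorphic
with boundary fixed point `1` and finite angular derivative `β₁ > 0`, then
`k_Δ(t, f(t)) → (1/2)|log β₁|` as `t → 1⁻` along the radius. -/
theorem poincare_distance_to_image_limit
    (f : ℂ → ℂ)
    (hf_hol : DifferentiableOn ℂ f (Metric.ball 0 1))
    (hf_maps : MapsTo f (Metric.ball 0 1) (Metric.ball 0 1))
    (β : ℝ) (hβ : 0 < β)
    -- `1` is a boundary fixed point: `f(t) → 1` radially:
    (hfix : Tendsto (fun t : ℝ => f t) (𝓝[Ioo (0:ℝ) 1] 1) (𝓝 1))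
    -- finite angular derivative `β₁ = β` at `1`:
    (hder : Tendsto (fun t : ℝ => (1 - f t) / (1 - (t : ℂ)))
      (𝓝[Ioo (0:ℝ) 1] 1) (𝓝 (β : ℂ)))
    -- Julia–Wolff–Carathéodory: `(1 − t)/(1 − |f(t)|) → 1/β`:
    (hJWC : Tendsto (fun t : ℝ => (1 - t) / (1 - ‖f t‖))
      (𝓝[Ioo (0:ℝ) 1] 1) (𝓝 (1 / β))) :
    Tendsto (fun t : ℝ => poincareDist t (f t)) (𝓝[Ioo (0:ℝ) 1] 1)
      (𝓝 (|Real.log β| / 2)) := by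
  set l := 𝓝[Ioo (0:ℝ) 1] (1:ℝ) with hl
  set g : ℝ → ℂ := fun t => (1 - f t) / (1 - (t : ℂ)) with hgdef
  have hg : Tendsto g l (𝓝 (β : ℂ)) := hder
  have htc : Tendsto (fun t : ℝ => (t : ℂ)) l (𝓝 1) := by
    refine Tendsto.mono_left ?_ nhdsWithin_le_nhds
    simpa using Complex.continuous_ofReal.tendsto (1 : ℝ)
  have hh : Tendsto (fun t : ℝ => 1 + (t : ℂ) * g t) l (𝓝 (1 + (β : ℂ))) := by
    have h := (tendsto_const_nhds : Tendsto (fun _ : ℝ => (1 : ℂ)) l (𝓝 1)).add (htc.mul hg)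
    simpa using h
  have h1β : (1 : ℂ) + (β : ℂ) ≠ 0 := by
    have : ((1 + β : ℝ) : ℂ) ≠ 0 := Complex.ofReal_ne_zero.mpr (by linarith)
    simpa [Complex.ofReal_add] using this
  have hhne : ∀ᶠ t : ℝ in l, 1 + (t : ℂ) * g t ≠ 0 := hh.eventually_ne h1β
  have htne : ∀ᶠ t : ℝ in l, (1 : ℂ) - (t : ℂ) ≠ 0 := by
    filter_upwards [eventually_mem_nhdsWithin] with t ht
    have h1 : (t : ℂ) ≠ 1 := by
      simp only [ne_eq, Complex.ofReal_eq_one]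
      exact ne_of_lt ht.2
    exact fun h => h1 ((sub_eq_zero.mp h).symm)
  set r : ℝ → ℝ := fun t => ‖(g t - 1) / (1 + (t : ℂ) * g t)‖ with hrdef
  have hkey : ∀ᶠ t : ℝ in l, poincareDist t (f t) = Real.log ((1 + r t) / (1 - r t)) / 2 := by
    filter_upwards [htne, hhne] with t hc hh0
    have hconj : (starRingEnd ℂ) (t : ℂ) = (t : ℂ) := Complex.conj_ofReal t
    have hgt : g t = (1 - f t) / (1 - (t : ℂ)) := rfl
    have h1tf : 1 - (t : ℂ) * f t = (1 - (t : ℂ)) * (1 + (t : ℂ) * g t) := by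
      rw [hgt]; field_simp; ring
    have h1tfne : 1 - (t : ℂ) * f t ≠ 0 := h1tf ▸ mul_ne_zero hc hh0
    have hfrac : ((t : ℂ) - f t) / (1 - (t : ℂ) * f t) = (g t - 1) / (1 + (t : ℂ) * g t) := by
      rw [div_eq_div_iff h1tfne hh0, hgt]
      field_simp
      try ring
      try tauto
    simp only [poincareDist, hconj, hfrac, hrdef]
  set L0 : ℝ := |β - 1| / (1 + β) with hL0def
  have hrlim : Tendsto r l (𝓝 L0) := by
    have h1 : Tendsto (fun t : ℝ => ‖g t - 1‖) l (𝓝 (‖(β : ℂ) - 1‖)) :=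
      (continuous_norm.tendsto _).comp (hg.sub tendsto_const_nhds)
    have h2 : Tendsto (fun t : ℝ => ‖1 + (t : ℂ) * g t‖) l
        (𝓝 (‖1 + (β : ℂ)‖)) := (continuous_norm.tendsto _).comp hh
    have habs1 : ‖(β : ℂ) - 1‖ = |β - 1| := by
      rw [show ((β : ℂ) - 1) = ((β - 1 : ℝ) : ℂ) by push_cast; ring, Complex.norm_real, Real.norm_eq_abs]
    have habs2 : ‖1 + (β : ℂ)‖ = 1 + β := by
      rw [show ((1 : ℂ) + (β : ℂ)) = ((1 + β : ℝ) : ℂ) by push_cast; ring,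
        Complex.norm_real, Real.norm_eq_abs, abs_of_pos (by linarith)]
    have hne2 : ‖1 + (β : ℂ)‖ ≠ 0 := by rw [habs2]; positivity
    have := h1.div h2 hne2
    rw [habs1, habs2] at this
    refine this.congr fun t => ?_
    rw [hrdef]
    exact (norm_div _ _).symm
  have hL0lt : L0 < 1 := by
    rw [hL0def, div_lt_one (by linarith)]
    rcases le_total 1 β with h | h
    · rw [abs_of_nonneg (by linarith)]; linarith
    · rw [abs_sub_comm, abs_of_nonneg (by linarith)]; linarith
  have hL0nonneg : 0 ≤ L0 := div_nonneg (abs_nonneg _) (by linarith)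
  have hcont : ContinuousAt (fun x : ℝ => Real.log ((1 + x) / (1 - x)) / 2) L0 := by
    have hden : (1 : ℝ) - L0 ≠ 0 := by linarith
    have hpos : (0 : ℝ) < (1 + L0) / (1 - L0) := div_pos (by linarith) (by linarith)
    exact (((continuousAt_const.add continuousAt_id).div
      (continuousAt_const.sub continuousAt_id) hden).log (ne_of_gt hpos)).div_const 2
  have h1b : (1 : ℝ) + β ≠ 0 := by linarith
  have hval : Real.log ((1 + L0) / (1 - L0)) / 2 = |Real.log β| / 2 := by
    congr 1
    rcases le_total 1 β with h | h
    · have habs : |β - 1| = β - 1 := abs_of_nonneg (by linarith)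
      have hq : (1 + L0) / (1 - L0) = β := by
        rw [hL0def, habs]
        field_simp
        ring
      rw [hq, abs_of_nonneg (Real.log_nonneg h)]
    · have habs : |β - 1| = 1 - β := by rw [abs_sub_comm]; exact abs_of_nonneg (by linarith)
      have hq : (1 + L0) / (1 - L0) = β⁻¹ := by
        rw [hL0def, habs]
        rw [div_eq_iff, inv_mul_eq_div, eq_div_iff hβ.ne']
        · field_simp
          ring
        · intro hz
          have : (1 : ℝ) - (1 - β) / (1 + β) = (2 * β) / (1 + β) := by field_simp; ring
          rw [this] at hz
          have := div_eq_zero_iff.mp hz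
          rcases this with h' | h' <;> [linarith; exact h1b h']
      rw [hq, Real.log_inv, abs_of_nonpos (Real.log_nonpos (le_of_lt hβ) h)]
  have hfinal := hcont.tendsto.comp hrlim
  rw [hval] at hfinal
  exact hfinal.congr' (by filter_upwards [hkey] with t ht; exact ht.symm)
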